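/- arXiv:1702.06785 — 3 statements merged into one kernel-verified Lean document; each statement's English description precedes it below -/
import Mathlib

section
/- Let R ⊆ ℝ^d be a nonempty bounded open set, U a metric space, λ a finite Radon probability measure with support in R, and for each α ∈ U let ν_α be a Radon probability measure with support in R. For each continuous f : R → [0,1] define Φ_f(α) := ∫ f dν_α. If for every such f the map α ↦ Φ_f(α) is lower semicontinuous, then the set {α ∈ U : ν_α ⊥ λ} is a G_δ subset of U. -/
/-!
A finite Borel measure `μ` on a metric space is singular to `λ` exactly when
`∫ f dμ + ∫ (1 - f) dλ` can be made arbitrarily small over continuous `f` with values in `[0, 1]`.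
One direction is regularity plus Urysohn's lemma: take a closed `K` carrying almost all of `λ`
and `μ`-null, an open `V ⊇ K` of small `μ`-measure, and `f` separating `K` from `Vᶜ`. For the
other, any measure `ξ ≤ μ, λ` has total mass at most `∫ f dμ + ∫ (1 - f) dλ`, so `ξ = 0`.
Hence `{α | ν α ⟂ λ}` is the intersection over `n` of the unions over `f` of
`{α | ∫ f dν α < 1/(n+1) - ∫ (1 - f) dλ}`, and these sets are open because
`α ↦ ∫ f dν α = 1 - ∫ (1 - f) dν α` is upper semicontinuous.
-/

open MeasureTheory Set

namespace MeasureTheory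

variable {X : Type*} [MeasurableSpace X]

lemma ae_mem_of_mapsTo {Y : Type*} {μ : Measure X} {R : Set X} (hμR : μ Rᶜ = 0) {f : X → Y}
    {T : Set Y} (hf : MapsTo f R T) : ∀ᵐ x ∂μ, f x ∈ T :=
  (ae_iff.2 hμR).mono fun _ hx => hf hx

lemma integrable_of_continuousOn_of_mapsTo_Icc [TopologicalSpace X] [OpensMeasurableSpace X]
    {μ : Measure X} [IsFiniteMeasure μ] {R : Set X} (hR : MeasurableSet R) (hμR : μ Rᶜ = 0)
    {f : X → ℝ} (hf : ContinuousOn f R) (hfR : MapsTo f R (Icc 0 1)) : Integrable f μ := by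
  have hfm : AEMeasurable f μ := by
    simpa [Measure.restrict_eq_self_of_ae_mem (ae_iff.2 hμR)] using hf.aemeasurable hR (μ := μ)
  refine .of_bound hfm.aestronglyMeasurable 1 ((ae_mem_of_mapsTo hμR hfR).mono fun x hx => ?_)
  rw [Real.norm_eq_abs, abs_le]
  exact ⟨by linarith [hx.1], hx.2⟩

lemma integral_le_measureReal_of_le_indicator_one {μ : Measure X} [IsFiniteMeasure μ]
    {f : X → ℝ} (hf : Integrable f μ) {s : Set X} (hs : MeasurableSet s)
    (hfs : f ≤ s.indicator 1) : ∫ x, f x ∂μ ≤ μ.real s :=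
  (integral_mono hf ((integrable_const 1).indicator hs) hfs).trans_eq (integral_indicator_one hs)

lemma measureReal_univ_le_integral_add_integral_one_sub {ξ μ ν : Measure X}
    [IsFiniteMeasure μ] [IsFiniteMeasure ν] (hξμ : ξ ≤ μ) (hξν : ξ ≤ ν) {f : X → ℝ}
    (hfμ : Integrable f μ) (hfν : Integrable f ν) (hf₀ : 0 ≤ᵐ[μ] f) (hf₁ : ∀ᵐ x ∂ν, f x ≤ 1) :
    ξ.real univ ≤ ∫ x, f x ∂μ + ∫ x, (1 - f x) ∂ν := by
  have : IsFiniteMeasure ξ := isFiniteMeasure_of_le μ hξμ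
  calc ξ.real univ = ∫ x, f x ∂ξ + ∫ x, (1 - f x) ∂ξ := by
        rw [integral_sub (integrable_const 1) (hfμ.mono_measure hξμ), integral_const]
        simp
    _ ≤ ∫ x, f x ∂μ + ∫ x, (1 - f x) ∂ν :=
        add_le_add (integral_mono_measure hξμ hf₀ hfμ)
          (integral_mono_measure hξν (hf₁.mono fun _ hx => sub_nonneg.2 hx)
            ((integrable_const 1).sub hfν))

namespace Measure

variable [TopologicalSpace X] {μ ν : Measure X} [IsFiniteMeasure μ] [IsFiniteMeasure ν]

lemma MutuallySingular.exists_continuous_integral_add_integral_one_sub_lt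
    [TopologicalSpace.PseudoMetrizableSpace X] [BorelSpace X] (h : μ ⟂ₘ ν) {ε : ℝ} (hε : 0 < ε) :
    ∃ f : C(X, ℝ), (∀ x, f x ∈ Icc (0 : ℝ) 1) ∧ ∫ x, f x ∂μ + ∫ x, (1 - f x) ∂ν < ε := by
  have hε' : ENNReal.ofReal (ε / 2) ≠ 0 := by simpa using hε
  obtain ⟨K, hKs, hK, hνK⟩ := h.measurableSet_nullSet.exists_isClosed_sdiff_lt
    (measure_ne_top ν _) hε'
  have hνKc : ν Kᶜ < ENNReal.ofReal (ε / 2) := by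
    rwa [sdiff_eq, inter_comm, measure_inter_conull h.measure_compl_nullSet] at hνK
  have hμK : μ K = 0 := measure_mono_null hKs h.measure_nullSet
  obtain ⟨V, hKV, hV, hμV⟩ := K.exists_isOpen_lt_of_lt _ (hμK ▸ pos_iff_ne_zero.2 hε')
  obtain ⟨f, hfV, hfK, hf01⟩ := exists_continuous_zero_one_of_isClosed hV.isClosed_compl hK
    (disjoint_compl_left_iff_subset.2 hKV)
  have hfi (ρ : Measure X) [IsFiniteMeasure ρ] : Integrable f ρ :=
    integrable_of_continuousOn_of_mapsTo_Icc .univ (by simp) f.continuous.continuousOn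
      fun x _ => hf01 x
  have hfμ : ∫ x, f x ∂μ ≤ μ.real V := by
    refine integral_le_measureReal_of_le_indicator_one (hfi μ) hV.measurableSet fun x => ?_
    by_cases hx : x ∈ V
    · simpa [hx] using (hf01 x).2
    · simp [hx, hfV hx]
  have hfν : ∫ x, (1 - f x) ∂ν ≤ ν.real Kᶜ := by
    refine integral_le_measureReal_of_le_indicator_one ((integrable_const 1).sub (hfi ν))
      hK.measurableSet.compl fun x => ?_
    by_cases hx : x ∈ K
    · simp [hx, hfK hx]
    · simpa [hx] using (hf01 x).1
  have hμV' : μ.real V < ε / 2 := ENNReal.toReal_lt_of_lt_ofReal hμV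
  have hνKc' : ν.real Kᶜ < ε / 2 := ENNReal.toReal_lt_of_lt_ofReal hνKc
  exact ⟨f, hf01, by linarith⟩

lemma mutuallySingular_of_forall_exists_integral_lt [OpensMeasurableSpace X] {R : Set X}
    (hR : MeasurableSet R) (hμR : μ Rᶜ = 0) (hνR : ν Rᶜ = 0)
    (h : ∀ ε > 0, ∃ f : X → ℝ, ContinuousOn f R ∧ MapsTo f R (Icc 0 1) ∧
      ∫ x, f x ∂μ + ∫ x, (1 - f x) ∂ν < ε) :
    μ ⟂ₘ ν := by
  rw [mutuallySingular_iff_disjoint]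
  intro ξ hξμ hξν
  have : IsFiniteMeasure ξ := isFiniteMeasure_of_le μ hξμ
  have hξ : ξ.real univ ≤ 0 := le_of_forall_pos_lt_add fun ε hε => by
    obtain ⟨f, hf, hfR, hlt⟩ := h ε hε
    refine (measureReal_univ_le_integral_add_integral_one_sub hξμ hξν
      (integrable_of_continuousOn_of_mapsTo_Icc hR hμR hf hfR)
      (integrable_of_continuousOn_of_mapsTo_Icc hR hνR hf hfR)
      ((ae_mem_of_mapsTo hμR hfR).mono fun _ hx => hx.1)
      ((ae_mem_of_mapsTo hνR hfR).mono fun _ hx => hx.2)).trans_lt ?_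
    rwa [zero_add]
  exact le_bot_iff.2 <| measure_univ_eq_zero.1 <|
    (measureReal_eq_zero_iff (measure_ne_top ξ univ)).1 (hξ.antisymm measureReal_nonneg)

theorem mutuallySingular_iff_forall_exists_integral_lt [TopologicalSpace.PseudoMetrizableSpace X]
    [BorelSpace X] {R : Set X} (hR : MeasurableSet R) (hμR : μ Rᶜ = 0) (hνR : ν Rᶜ = 0) :
    μ ⟂ₘ ν ↔ ∀ ε > 0, ∃ f : X → ℝ, ContinuousOn f R ∧ MapsTo f R (Icc 0 1) ∧
      ∫ x, f x ∂μ + ∫ x, (1 - f x) ∂ν < ε := by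
  refine ⟨fun h ε hε => ?_, mutuallySingular_of_forall_exists_integral_lt hR hμR hνR⟩
  obtain ⟨f, hf01, hlt⟩ := h.exists_continuous_integral_add_integral_one_sub_lt hε
  exact ⟨f, f.continuous.continuousOn, fun x _ => hf01 x, hlt⟩

end Measure

lemma isOpen_setOf_integral_lt {U : Type*} [TopologicalSpace U] (ν : U → Measure X)
    [∀ α, IsProbabilityMeasure (ν α)] {f : X → ℝ} (hf : ∀ α, Integrable f (ν α))
    (hlsc : LowerSemicontinuous fun α => ∫ x, (1 - f x) ∂ν α) (c : ℝ) :
    IsOpen {α | ∫ x, f x ∂ν α < c} := by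
  have : {α | ∫ x, f x ∂ν α < c} = (fun α => ∫ x, (1 - f x) ∂ν α) ⁻¹' Ioi (1 - c) := by
    ext α
    simp only [mem_ofPred_eq, mem_preimage, mem_Ioi,
      integral_sub (integrable_const 1) (hf α), integral_const, probReal_univ, smul_eq_mul,
      mul_one]
    constructor <;> intro <;> linarith
  exact this ▸ hlsc.isOpen_preimage _

end MeasureTheory

theorem stmt0_general {d : ℕ} {U : Type*} [MetricSpace U]
    (R : Set (EuclideanSpace ℝ (Fin d))) (hRo : IsOpen R)
    (lam : Measure (EuclideanSpace ℝ (Fin d))) [IsProbabilityMeasure lam] (hlam : lam Rᶜ = 0)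
    (ν : U → Measure (EuclideanSpace ℝ (Fin d))) [∀ α, IsProbabilityMeasure (ν α)]
    (hν : ∀ α, (ν α) Rᶜ = 0)
    (hlsc : ∀ f : EuclideanSpace ℝ (Fin d) → ℝ, ContinuousOn f R →
      MapsTo f R (Icc (0:ℝ) 1) →
      LowerSemicontinuous (fun α => ∫ x, f x ∂(ν α))) :
    IsGδ {α : U | (ν α).MutuallySingular lam} := by
  have hR := hRo.measurableSet
  have hsingular : {α : U | (ν α).MutuallySingular lam} = ⋂ n : ℕ,
      ⋃ f ∈ {f : EuclideanSpace ℝ (Fin d) → ℝ | ContinuousOn f R ∧ MapsTo f R (Icc 0 1)},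
        {α | ∫ x, f x ∂ν α < 1 / (n + 1) - ∫ x, (1 - f x) ∂lam} := by
    ext α
    simp only [mem_ofPred_eq, mem_iInter, mem_iUnion, lt_sub_iff_add_lt, exists_prop,
      Measure.mutuallySingular_iff_forall_exists_integral_lt hR (hν α) hlam]
    refine ⟨fun h n => ?_, fun h ε hε => ?_⟩
    · obtain ⟨f, hf, hfR, hlt⟩ := h _ Nat.one_div_pos_of_nat
      exact ⟨f, ⟨hf, hfR⟩, hlt⟩
    · obtain ⟨n, hn⟩ := exists_nat_one_div_lt hε
      obtain ⟨f, ⟨hf, hfR⟩, hlt⟩ := h n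
      exact ⟨f, hf, hfR, hlt.trans hn⟩
  rw [hsingular]
  refine IsGδ.iInter_of_isOpen fun n => isOpen_biUnion fun f ⟨hf, hfR⟩ => ?_
  refine isOpen_setOf_integral_lt ν
    (fun α => integrable_of_continuousOn_of_mapsTo_Icc hR (hν α) hf hfR)
    (hlsc _ (continuousOn_const.sub hf) fun x hx => ?_) _
  exact ⟨sub_nonneg.2 (hfR hx).2, sub_le_self _ (hfR hx).1⟩

/-- If `R ⊆ ℝ^d` is a nonempty bounded open set, `lam` is a finite Radon
probability measure supported in `R`, each `ν α` is a Radon probability measure supported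
in `R`, and for every continuous `f : R → [0,1]` the map `α ↦ ∫ f dν_α` is lower
semicontinuous, then `{α | ν α ⊥ lam}` is a Gδ set. -/
theorem stmt0 {d : ℕ} {U : Type*} [MetricSpace U]
    (R : Set (EuclideanSpace ℝ (Fin d))) (hRne : R.Nonempty) (hRb : Bornology.IsBounded R)
    (hRo : IsOpen R)
    (lam : Measure (EuclideanSpace ℝ (Fin d))) [IsFiniteMeasure lam] [IsProbabilityMeasure lam]
    [lam.Regular] (hlam : lam Rᶜ = 0)
    (ν : U → Measure (EuclideanSpace ℝ (Fin d))) [∀ α, IsProbabilityMeasure (ν α)]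
    [∀ α, (ν α).Regular] (hν : ∀ α, (ν α) Rᶜ = 0)
    (hlsc : ∀ f : EuclideanSpace ℝ (Fin d) → ℝ, ContinuousOn f R →
      MapsTo f R (Icc (0:ℝ) 1) →
      LowerSemicontinuous (fun α => ∫ x, f x ∂(ν α))) :
    IsGδ {α : U | (ν α).MutuallySingular lam} :=
  stmt0_general R hRo lam hlam ν hν hlsc
end

section
/- Let U be a compact metric space, Ω a compact metric space, R an open ball in ℝ^d, Π : U × Ω → R continuous, μ a Radon probability measure on Ω, ν_α := (Π(α,·))_* μ, and λ a Radon measure with support contained in R. Then the set {α ∈ U : ν_α ⊥ λ} is a G_δ subset of U. -/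
/-!
Mutual singularity `ν ⟂ₘ λ` is equivalent, by outer regularity of `λ` and Borel–Cantelli, to:
for every `n` there is an open `G` with `λ G < 2⁻ⁿ` and `ν Gᶜ < 2⁻ⁿ`. For a fixed closed set `F`,
`α ↦ μ (Π(α, ·)⁻¹ F)` is upper semicontinuous, because `Ω` is compact and `μ` is outer regular
(as is every finite Borel measure on a metric space).
So for each `n` the parameters admitting such a `G` form a union of open sets, and the singular
parameters are their countable intersection.
-/

open MeasureTheory Set Filter ENNReal Topology

namespace MeasureTheory.Measure

variable {X : Type*} [MeasurableSpace X] {μ ν : Measure X}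

theorem MutuallySingular.of_tsum_ne_top {ε : ℕ → ℝ≥0∞}
    (hε : ∑' n, ε n ≠ ∞) (G : ℕ → Set X) (hμ : ∀ n, μ (G n)ᶜ ≤ ε n) (hν : ∀ n, ν (G n) ≤ ε n) :
    μ ⟂ₘ ν := by
  have summable_bound {m : Measure X} {s : ℕ → Set X} (hs : ∀ n, m (s n) ≤ ε n) :
      ∑' n, m (s n) ≠ ∞ :=
    ne_top_of_le_ne_top hε (ENNReal.tsum_le_tsum hs)
  refine MutuallySingular.mk (measure_limsup_atTop_eq_zero (summable_bound hμ))
    (measure_limsup_atTop_eq_zero (summable_bound hν)) fun x _ => ?_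
  simp only [mem_union, mem_limsup_iff_frequently_mem, mem_compl_iff]
  by_contra! h
  exact (h.1.and h.2).exists.elim fun _ hn => hn.2 hn.1

variable [TopologicalSpace X]

theorem MutuallySingular.exists_isOpen_measure_lt [ν.OuterRegular] (h : μ ⟂ₘ ν) {ε : ℝ≥0∞}
    (hε : 0 < ε) : ∃ G, IsOpen G ∧ ν G < ε ∧ μ Gᶜ < ε := by
  obtain ⟨G, hsG, hG, hνG⟩ := h.nullSetᶜ.exists_isOpen_lt_of_lt ε
    (by rwa [h.measure_compl_nullSet])
  exact ⟨G, hG, hνG, (measure_mono_null (compl_subset_comm.mp hsG) h.measure_nullSet).trans_lt hε⟩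

theorem mutuallySingular_iff_forall_exists_isOpen [ν.OuterRegular] :
    μ ⟂ₘ ν ↔ ∀ n : ℕ, ∃ G, IsOpen G ∧ ν G < 2⁻¹ ^ n ∧ μ Gᶜ < 2⁻¹ ^ n := by
  refine ⟨fun h n => h.exists_isOpen_measure_lt (ENNReal.pow_pos (by simp) n), fun h => ?_⟩
  choose G _ hν hμ using h
  exact .of_tsum_ne_top (by simp) G (fun n => (hμ n).le) fun n => (hν n).le

end MeasureTheory.Measure

theorem IsClosed.upperSemicontinuous_measure_preimage_prodMk {U Ω : Type*}
    [TopologicalSpace U] [TopologicalSpace Ω] [CompactSpace Ω] [MeasurableSpace Ω]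
    (μ : Measure Ω) [μ.OuterRegular] {C : Set (U × Ω)} (hC : IsClosed C) :
    UpperSemicontinuous fun α => μ (Prod.mk α ⁻¹' C) := by
  intro α r hr
  obtain ⟨O, hCO, hO, hμO⟩ := (Prod.mk α ⁻¹' C).exists_isOpen_lt_of_lt r hr
  -- the parameters whose section leaves `O` form a closed set, by compactness of `Ω`
  have hbad : IsClosed (Prod.fst '' (C ∩ univ ×ˢ Oᶜ)) :=
    isClosedMap_fst_of_compactSpace _ (hC.inter (isClosed_univ.prod hO.isClosed_compl))
  have hα : α ∉ Prod.fst '' (C ∩ univ ×ˢ Oᶜ) := by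
    rintro ⟨⟨_, ω⟩, ⟨hC, -, hω⟩, rfl⟩
    exact hω (hCO hC)
  filter_upwards [hbad.isOpen_compl.mem_nhds hα] with β hβ
  refine lt_of_le_of_lt (measure_mono fun ω hω => ?_) hμO
  by_contra hωO
  exact hβ ⟨(β, ω), ⟨hω, mem_univ _, hωO⟩, rfl⟩

theorem stmt2_general {d : ℕ} {U Ω : Type*} [MetricSpace U]
    [MetricSpace Ω] [CompactSpace Ω] [MeasurableSpace Ω] [BorelSpace Ω]
    (Pi : U × Ω → EuclideanSpace ℝ (Fin d)) (hPi : Continuous Pi)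
    (μ : Measure Ω) [IsProbabilityMeasure μ]
    (ν : U → Measure (EuclideanSpace ℝ (Fin d)))
    (hν : ∀ α, ν α = Measure.map (fun ω => Pi (α, ω)) μ)
    (lam : Measure (EuclideanSpace ℝ (Fin d))) [IsFiniteMeasure lam] :
    IsGδ {α : U | (ν α).MutuallySingular lam} := by
  have hν_compl (α : U) {G : Set (EuclideanSpace ℝ (Fin d))} (hG : IsOpen G) :
      ν α Gᶜ = μ (Prod.mk α ⁻¹' (Pi ⁻¹' Gᶜ)) := by
    rw [hν, Measure.map_apply (by fun_prop : Continuous fun ω => Pi (α, ω)).measurable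
      hG.isClosed_compl.measurableSet]
    rfl
  have hopen (n : ℕ) : IsOpen {α | ∃ G, IsOpen G ∧ lam G < 2⁻¹ ^ n ∧ ν α Gᶜ < 2⁻¹ ^ n} := by
    refine isOpen_iff_mem_nhds.mpr fun α ⟨G, hG, hlamG, hνG⟩ => ?_
    have husc := (hG.isClosed_compl.preimage hPi).upperSemicontinuous_measure_preimage_prodMk μ
    rw [hν_compl α hG] at hνG
    filter_upwards [husc α _ hνG] with β hβ
    exact ⟨G, hG, hlamG, (hν_compl β hG).trans_lt hβ⟩
  simp only [Measure.mutuallySingular_iff_forall_exists_isOpen, ofPred_forall]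
  exact .iInter_of_isOpen hopen

/-- With `Π : U × Ω → R` continuous on compact metric spaces, values in an
open ball `R ⊆ ℝ^d`, `μ` a Radon probability measure on `Ω`, `ν α := (Π(α,·))_* μ` and
`lam` a Radon measure supported in `R`, the set of parameters of singularity
`{α | ν α ⊥ lam}` is a Gδ subset of `U`. -/
theorem stmt2 {d : ℕ} {U Ω : Type*} [MetricSpace U] [CompactSpace U]
    [MetricSpace Ω] [CompactSpace Ω] [MeasurableSpace Ω] [BorelSpace Ω]
    (c : EuclideanSpace ℝ (Fin d)) (rad : ℝ) (hrad : 0 < rad)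
    (Pi : U × Ω → EuclideanSpace ℝ (Fin d)) (hPi : Continuous Pi)
    (hPiR : ∀ p, Pi p ∈ Metric.ball c rad)
    (μ : Measure Ω) [IsProbabilityMeasure μ] [μ.Regular]
    (ν : U → Measure (EuclideanSpace ℝ (Fin d)))
    (hν : ∀ α, ν α = Measure.map (fun ω => Pi (α, ω)) μ)
    (lam : Measure (EuclideanSpace ℝ (Fin d))) [IsFiniteMeasure lam] [lam.Regular]
    (hlam : lam (Metric.ball c rad)ᶜ = 0) :
    IsGδ {α : U | (ν α).MutuallySingular lam} :=
  stmt2_general Pi hPi μ ν hν lam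
end

section
/- Let U be a compact metric space and for each α ∈ U let ν_α be a Radon probability measure on a bounded open set R ⊆ ℝ^d such that α ↦ ∫ f dν_α is continuous for each continuous f : R → [0,1]. Let λ be a Radon probability measure on R. Then either {α : ν_α ⊥ λ} is nowhere dense in U, or, if U ⊆ ℝ^k has nonempty interior contained in the closure of the singularity set, the packing dimension of {α : ν_α ⊥ λ} equals k. -/
open Set Filter MeasureTheory

noncomputable def coveringNumber {X : Type*} [PseudoMetricSpace X] (E : Set X) (δ : ℝ) :
    ENNReal :=
  ⨅ (s : Finset X) (_ : E ⊆ ⋃ x ∈ s, Metric.ball x δ), (s.card : ENNReal)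

noncomputable def upperBoxDim {X : Type*} [PseudoMetricSpace X] (E : Set X) : EReal :=
  limsup (fun δ : ℝ => ENNReal.log (coveringNumber E δ) / ((- Real.log δ : ℝ) : EReal))
    (nhdsWithin 0 (Ioi 0))

noncomputable def packingDim {X : Type*} [PseudoMetricSpace X] (H : Set X) : EReal :=
  ⨅ (E : ℕ → Set X) (_ : H ⊆ ⋃ i, E i), ⨆ i, upperBoxDim (E i)

/-!
The singular set `S = {α ∈ U | ν α ⟂ₘ lam}` is a relative `Gδ` in `U`: `μ ⟂ₘ lam` iff for every
`ε > 0` some continuous `f` with values in `[0, 1]` has `∫ f ∂μ + ∫ (1 - f) ∂lam < ε`, and for a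
fixed `f` this is an open condition on `α` by the weak continuity of `α ↦ ν α`.
By Baire's theorem a `Gδ` set that is dense in the nonempty open set `interior U` is not covered by
countably many sets whose closures have empty interior. So every countable cover of `S` has a
member whose closure contains a ball, and a volume count of `δ`-covers of a ball shows that such a
set has upper box dimension at least `k`. The same count bounds the upper box dimension of any
bounded subset of `ℝ^k` by `k`.
-/

open Metric Module Topology
open scoped ENNReal

section BoxDimension

variable {X : Type*} [PseudoMetricSpace X]

lemma coveringNumber_mono {A B : Set X} (h : A ⊆ B) (δ : ℝ) :
    coveringNumber A δ ≤ coveringNumber B δ :=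
  le_iInf₂ fun s hs => iInf₂_le s (h.trans hs)

/-- A `δ`-separated subset of `A` of maximal cardinality is a `δ`-net of `A`. -/
lemma coveringNumber_le_of_separated_card_le {A : Set X} {δ : ℝ} (hδ : 0 < δ) {M : ℕ}
    (hM : ∀ s : Finset X, ↑s ⊆ A → (s : Set X).Pairwise (δ ≤ dist · ·) → s.card ≤ M) :
    coveringNumber A δ ≤ M := by
  classical
  set P : Set ℕ :=
    {m | ∃ s : Finset X, ↑s ⊆ A ∧ (s : Set X).Pairwise (δ ≤ dist · ·) ∧ s.card = m}
  have hP : BddAbove P := ⟨M, by rintro _ ⟨s, hsA, hsep, rfl⟩; exact hM s hsA hsep⟩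
  obtain ⟨s, hsA, hsep, hs⟩ := Nat.sSup_mem (s := P) ⟨0, ∅, by simp, by simp, rfl⟩ hP
  have hcover : A ⊆ ⋃ a ∈ s, ball a δ := by
    intro y hy
    by_contra hy'
    simp only [mem_iUnion, mem_ball, not_exists, not_lt] at hy'
    have hys : y ∉ s := fun h => (hy' y h).not_gt (by simpa using hδ)
    have hins : (insert y s).card ∈ P := by
      refine ⟨insert y s, ?_, ?_, rfl⟩
      · simpa [insert_subset_iff] using ⟨hy, hsA⟩
      · rw [Finset.coe_insert]
        exact hsep.insert fun b hb _ => ⟨hy' b hb, dist_comm y b ▸ hy' b hb⟩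
    have := le_csSup hP hins
    rw [Finset.card_insert_of_notMem hys, ← hs] at this
    omega
  exact (iInf₂_le s hcover).trans (by exact_mod_cast hM s hsA hsep)

lemma log_div_neg_log_le_of_le {a b : ℝ≥0∞} {δ : ℝ} (hδ0 : 0 < δ) (hδ1 : δ ≤ 1) (h : a ≤ b) :
    ENNReal.log a / ((-Real.log δ : ℝ) : EReal) ≤ ENNReal.log b / ((-Real.log δ : ℝ) : EReal) :=
  EReal.div_le_div_right_of_nonneg
    (by exact_mod_cast neg_nonneg.2 (Real.log_nonpos hδ0.le hδ1)) (ENNReal.log_monotone h)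

lemma tendsto_log_ofReal_div_pow_div_neg_log {c : ℝ} (hc : 0 < c) (n : ℕ) :
    Tendsto (fun δ : ℝ => ENNReal.log (ENNReal.ofReal (c / δ ^ n)) / ((-Real.log δ : ℝ) : EReal))
      (𝓝[>] 0) (𝓝 n) := by
  have hlog : Tendsto (fun δ : ℝ => -Real.log δ) (𝓝[>] 0) atTop :=
    tendsto_neg_atBot_atTop.comp Real.tendsto_log_nhdsGT_zero
  have hreal : Tendsto (fun δ : ℝ => (n : ℝ) + Real.log c * (-Real.log δ)⁻¹) (𝓝[>] 0) (𝓝 n) := by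
    simpa using (hlog.inv_tendsto_atTop.const_mul (Real.log c)).const_add (n : ℝ)
  refine (EReal.tendsto_coe.2 hreal).congr' ?_
  filter_upwards [Ioo_mem_nhdsGT one_pos] with δ ⟨hδ0, hδ1⟩
  have hlogδ : Real.log δ < 0 := Real.log_neg hδ0 hδ1
  rw [ENNReal.log_ofReal_of_pos (by positivity), ← EReal.coe_div,
    Real.log_div hc.ne' (by positivity), Real.log_pow]
  congr 1
  field_simp [hlogδ.ne]
  ring

lemma upperBoxDim_le_of_coveringNumber_le {A : Set X} {c : ℝ} (hc : 0 < c) (n : ℕ)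
    (h : ∀ᶠ δ in 𝓝[>] 0, coveringNumber A δ ≤ ENNReal.ofReal (c / δ ^ n)) :
    upperBoxDim A ≤ n := by
  refine (limsup_le_limsup ?_).trans_eq (tendsto_log_ofReal_div_pow_div_neg_log hc n).limsup_eq
  filter_upwards [h, Ioo_mem_nhdsGT one_pos] with δ hδ ⟨hδ0, hδ1⟩
  exact log_div_neg_log_le_of_le hδ0 hδ1.le hδ

lemma le_upperBoxDim_of_le_coveringNumber {A : Set X} {c : ℝ} (hc : 0 < c) (n : ℕ)
    (h : ∀ᶠ δ in 𝓝[>] 0, ENNReal.ofReal (c / δ ^ n) ≤ coveringNumber A δ) :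
    (n : EReal) ≤ upperBoxDim A := by
  refine (tendsto_log_ofReal_div_pow_div_neg_log hc n).limsup_eq.symm.trans_le
    (limsup_le_limsup ?_)
  filter_upwards [h, Ioo_mem_nhdsGT one_pos] with δ hδ ⟨hδ0, hδ1⟩
  exact log_div_neg_log_le_of_le hδ0 hδ1.le hδ

lemma packingDim_le_upperBoxDim (H : Set X) : packingDim H ≤ upperBoxDim H :=
  (iInf₂_le (fun _ => H) (subset_iUnion (fun _ : ℕ => H) 0)).trans_eq iSup_const

lemma le_packingDim {H : Set X} {c : EReal}
    (h : ∀ E : ℕ → Set X, H ⊆ ⋃ i, E i → ∃ i, c ≤ upperBoxDim (E i)) : c ≤ packingDim H :=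
  le_iInf₂ fun E hE => (h E hE).elim fun i hi => le_iSup_of_le i hi

end BoxDimension

section FiniteDimensional

variable {E : Type*} [NormedAddCommGroup E] [NormedSpace ℝ E] [FiniteDimensional ℝ E]

lemma measureReal_ball_eq [MeasurableSpace E] [BorelSpace E] (μ : Measure E)
    [μ.IsAddHaarMeasure] (x : E) {r : ℝ} (hr : 0 < r) :
    μ.real (ball x r) = r ^ finrank ℝ E * μ.real (ball 0 1) := by
  rw [measureReal_def, Measure.addHaar_ball_of_pos μ x hr, ENNReal.toReal_mul,
    ENNReal.toReal_ofReal (by positivity), measureReal_def]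

lemma measureReal_unitBall_pos [MeasurableSpace E] [BorelSpace E] (μ : Measure E)
    [μ.IsAddHaarMeasure] : 0 < μ.real (ball (0 : E) 1) :=
  ENNReal.toReal_pos (measure_ball_pos μ 0 one_pos).ne' measure_ball_lt_top.ne

lemma card_mul_pow_le_of_separated {s : Finset E} {ρ δ : ℝ} (hρ : 0 ≤ ρ) (hδ : 0 < δ)
    (hs : ↑s ⊆ closedBall (0 : E) ρ) (hsep : (s : Set E).Pairwise (δ ≤ dist · ·)) :
    (s.card : ℝ) * (δ / 2) ^ finrank ℝ E ≤ (ρ + δ / 2) ^ finrank ℝ E := by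
  borelize E
  set μ : Measure E := Measure.addHaar
  have hdisj : (s : Set E).PairwiseDisjoint (ball · (δ / 2)) := fun a ha b hb hab =>
    ball_disjoint_ball (by linarith [hsep ha hb hab])
  have hsub : ⋃ a ∈ s, ball a (δ / 2) ⊆ ball 0 (ρ + δ / 2) :=
    iUnion₂_subset fun a ha => ball_subset_ball' (by linarith [mem_closedBall.1 (hs ha)])
  have hvol : (s.card : ℝ) * (δ / 2) ^ finrank ℝ E * μ.real (ball 0 1)
      ≤ (ρ + δ / 2) ^ finrank ℝ E * μ.real (ball 0 1) :=
    calc (s.card : ℝ) * (δ / 2) ^ finrank ℝ E * μ.real (ball 0 1)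
        = ∑ a ∈ s, μ.real (ball a (δ / 2)) := by
          simp [measureReal_ball_eq μ _ (half_pos hδ), mul_assoc]
      _ = μ.real (⋃ a ∈ s, ball a (δ / 2)) :=
          (measureReal_biUnion_finset hdisj fun _ _ => measurableSet_ball).symm
      _ ≤ μ.real (ball 0 (ρ + δ / 2)) := measureReal_mono hsub
      _ = (ρ + δ / 2) ^ finrank ℝ E * μ.real (ball 0 1) := measureReal_ball_eq μ _ (by positivity)
  exact le_of_mul_le_mul_right hvol (measureReal_unitBall_pos μ)

lemma pow_le_card_mul_pow_of_ball_subset {s : Finset E} {x : E} {r δ : ℝ} (hr : 0 < r)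
    (hδ : 0 < δ) (h : ball x r ⊆ ⋃ a ∈ s, ball a δ) :
    r ^ finrank ℝ E ≤ s.card * δ ^ finrank ℝ E := by
  borelize E
  set μ : Measure E := Measure.addHaar
  have hvol : r ^ finrank ℝ E * μ.real (ball 0 1) ≤ s.card * δ ^ finrank ℝ E * μ.real (ball 0 1) :=
    calc r ^ finrank ℝ E * μ.real (ball 0 1) = μ.real (ball x r) :=
          (measureReal_ball_eq μ x hr).symm
      _ ≤ μ.real (⋃ a ∈ s, ball a δ) :=
          measureReal_mono h
            (measure_biUnion_lt_top s.finite_toSet fun _ _ => measure_ball_lt_top).ne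
      _ ≤ ∑ a ∈ s, μ.real (ball a δ) := measureReal_biUnion_finset_le s _
      _ = s.card * δ ^ finrank ℝ E * μ.real (ball 0 1) := by
          simp [measureReal_ball_eq μ _ hδ, mul_assoc]
  exact le_of_mul_le_mul_right hvol (measureReal_unitBall_pos μ)

lemma coveringNumber_closedBall_le {ρ δ : ℝ} (hδ : 0 < δ) (hδρ : δ ≤ ρ) :
    coveringNumber (closedBall (0 : E) ρ) δ
      ≤ ENNReal.ofReal ((3 * ρ) ^ finrank ℝ E / δ ^ finrank ℝ E) := by
  have hρ : 0 < ρ := hδ.trans_le hδρ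
  set n := finrank ℝ E
  have hcard (s : Finset E) (hs : ↑s ⊆ closedBall (0 : E) ρ)
      (hsep : (s : Set E).Pairwise (δ ≤ dist · ·)) : (s.card : ℝ) ≤ (3 * ρ) ^ n / δ ^ n := by
    rw [le_div_iff₀ (by positivity)]
    calc (s.card : ℝ) * δ ^ n = 2 ^ n * (s.card * (δ / 2) ^ n) := by
          rw [div_pow]; field_simp
      _ ≤ 2 ^ n * (ρ + δ / 2) ^ n := by gcongr; exact card_mul_pow_le_of_separated hρ.le hδ hs hsep
      _ = (2 * ρ + δ) ^ n := by rw [← mul_pow]; ring_nf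
      _ ≤ (3 * ρ) ^ n := by gcongr; linarith
  refine (coveringNumber_le_of_separated_card_le hδ fun s hs hsep =>
    Nat.le_floor (hcard s hs hsep)).trans ?_
  rw [← ENNReal.ofReal_natCast]
  exact ENNReal.ofReal_le_ofReal (Nat.floor_le (by positivity))

lemma le_coveringNumber_of_ball_subset_closure {A : Set E} {x : E} {r δ : ℝ} (hr : 0 < r)
    (hδ : 0 < δ) (h : ball x r ⊆ closure A) :
    ENNReal.ofReal ((r / 2) ^ finrank ℝ E / δ ^ finrank ℝ E) ≤ coveringNumber A δ := by
  refine le_iInf₂ fun s hs => ?_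
  have hclosure : closure A ⊆ ⋃ a ∈ s, closedBall a δ :=
    closure_minimal (hs.trans (iUnion₂_mono fun a _ => ball_subset_closedBall))
      (s.finite_toSet.isClosed_biUnion fun a _ => isClosed_closedBall)
  have hcover : ball x r ⊆ ⋃ a ∈ s, ball a (2 * δ) :=
    (h.trans hclosure).trans (iUnion₂_mono fun a _ => closedBall_subset_ball (by linarith))
  rw [← ENNReal.ofReal_natCast]
  refine ENNReal.ofReal_le_ofReal ((div_le_iff₀ (by positivity)).2 ?_)
  have := pow_le_card_mul_pow_of_ball_subset hr (by positivity) hcover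
  rw [div_pow, div_le_iff₀ (by positivity)]
  rw [mul_pow] at this
  linarith

theorem upperBoxDim_le_finrank {A : Set E} (hA : Bornology.IsBounded A) :
    upperBoxDim A ≤ finrank ℝ E := by
  obtain ⟨ρ, hρ, hAρ⟩ := hA.subset_closedBall_lt 0 0
  refine upperBoxDim_le_of_coveringNumber_le (by positivity : 0 < (3 * ρ) ^ finrank ℝ E) _ ?_
  filter_upwards [Ioc_mem_nhdsGT hρ] with δ ⟨hδ0, hδρ⟩
  exact (coveringNumber_mono hAρ δ).trans (coveringNumber_closedBall_le hδ0 hδρ)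

theorem finrank_le_upperBoxDim {A : Set E} (hA : (interior (closure A)).Nonempty) :
    (finrank ℝ E : EReal) ≤ upperBoxDim A := by
  obtain ⟨x, hx⟩ := hA
  obtain ⟨r, hr, hball⟩ := Metric.isOpen_iff.1 isOpen_interior x hx
  refine le_upperBoxDim_of_le_coveringNumber (by positivity : 0 < (r / 2) ^ finrank ℝ E) _ ?_
  filter_upwards [self_mem_nhdsWithin] with δ hδ
  exact le_coveringNumber_of_ball_subset_closure hr hδ (hball.trans interior_subset)

end FiniteDimensional

/-- The `Gδ` set `G ∩ V ∪ (closure V)ᶜ` is dense in the whole space, so Baire's theorem applies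
to it; the closure of `(closure V)ᶜ` misses `V`. -/
theorem IsGδ.exists_nonempty_interior_closure {X : Type*} [TopologicalSpace X] [BaireSpace X]
    {G V : Set X} (hG : IsGδ G) (hV : IsOpen V) (hVne : V.Nonempty) (hVG : V ⊆ closure G)
    {E : ℕ → Set X} (hE : G ∩ V ⊆ ⋃ i, E i) : ∃ i, (interior (closure (E i))).Nonempty := by
  set W := (closure V)ᶜ
  have hVW : Disjoint V (closure W) :=
    (disjoint_compl_right.mono_left subset_closure).closure_right hV
  have hdense : Dense (G ∩ V ∪ W) := by
    intro x
    by_cases hx : x ∈ closure V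
    · refine closure_mono subset_union_left (closure_minimal (fun y hy => ?_) isClosed_closure hx)
      exact closure_mono (inter_comm V G).subset (hV.inter_closure ⟨hy, hVG hy⟩)
    · exact subset_closure (Or.inr hx)
  set F : Option ℕ → Set X := fun i => i.elim (closure W) (closure ∘ E)
  have hcover : G ∩ V ∪ W ⊆ ⋃ i, F i := by
    rintro x (hx | hx)
    · obtain ⟨i, hi⟩ := mem_iUnion.1 (hE hx)
      exact mem_iUnion.2 ⟨some i, subset_closure hi⟩
    · exact mem_iUnion.2 ⟨none, subset_closure hx⟩
  obtain ⟨x, hxV, hx⟩ := ((hG.inter hV.isGδ).union isClosed_closure.isOpen_compl.isGδ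
    |>.dense_iUnion_interior_of_closed hdense (fun i => i.rec isClosed_closure fun _ =>
      isClosed_closure) hcover).inter_open_nonempty V hV hVne
  obtain ⟨i | i, hi⟩ := mem_iUnion.1 hx
  · exact (hVW.ne_of_mem hxV (interior_subset hi) rfl).elim
  · exact ⟨i, x, hi⟩

lemma exists_isGδ_inter_eq {X ι : Type*} [TopologicalSpace X] {U : Set X} {g : ι → X → ℝ}
    (hg : ∀ i, ContinuousOn (g i) U) :
    ∃ G, IsGδ G ∧ G ∩ U = {x ∈ U | ∀ ε > 0, ∃ i, g i x < ε} := by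
  have (n : ℕ) (i : ι) : ∃ O, IsOpen O ∧ g i ⁻¹' Iio (1 / (n + 1)) ∩ U = O ∩ U :=
    continuousOn_iff'.1 (hg i) _ isOpen_Iio
  choose O hO hOU using this
  refine ⟨⋂ n, ⋃ i, O n i, .iInter_of_isOpen fun n => isOpen_iUnion (hO n), ?_⟩
  ext x
  simp only [mem_inter_iff, mem_iInter, mem_iUnion, mem_ofPred_eq]
  refine ⟨fun ⟨hx, hxU⟩ => ⟨hxU, fun ε hε => ?_⟩, fun ⟨hxU, hx⟩ => ⟨fun n => ?_, hxU⟩⟩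
  · obtain ⟨n, hn⟩ := exists_nat_one_div_lt hε
    obtain ⟨i, hi⟩ := hx n
    exact ⟨i, lt_trans ((hOU n i).symm ▸ ⟨hi, hxU⟩ : x ∈ g i ⁻¹' Iio _ ∩ U).1 hn⟩
  · obtain ⟨i, hi⟩ := hx _ (Nat.one_div_pos_of_nat (n := n))
    exact ⟨i, ((hOU n i) ▸ ⟨hi, hxU⟩ : x ∈ O n i ∩ U).1⟩

section Singularity

variable {X : Type*} [MeasurableSpace X] {μ ν : Measure X}

lemma integral_le_measureReal_of_le_indicator [IsFiniteMeasure μ] {g : X → ℝ} {s : Set X}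
    (hs : MeasurableSet s) (hg0 : 0 ≤ g) (hg : g ≤ s.indicator 1) : ∫ x, g x ∂μ ≤ μ.real s := by
  rw [← integral_indicator_one hs]
  exact integral_mono_of_nonneg (.of_forall hg0) ((integrable_const 1).indicator hs)
    (.of_forall hg)

lemma integrable_of_mem_Icc [IsFiniteMeasure μ] {g : X → ℝ} (hg : AEStronglyMeasurable g μ)
    (hg01 : ∀ x, g x ∈ Icc 0 1) : Integrable g μ :=
  (integrable_const 1).mono' hg
    (.of_forall fun x => abs_le.2 ⟨by linarith [(hg01 x).1], (hg01 x).2⟩)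

variable [TopologicalSpace X]

/-- Urysohn's lemma separates a closed set carrying almost all of `ν` from the complement of an
open set of small `μ`-measure. -/
theorem MeasureTheory.Measure.MutuallySingular.exists_continuous_integral_add_lt [NormalSpace X]
    [OpensMeasurableSpace X] [IsFiniteMeasure μ] [IsFiniteMeasure ν] [μ.OuterRegular]
    [ν.OuterRegular] (h : μ ⟂ₘ ν) {ε : ℝ} (hε : 0 < ε) :
    ∃ f : C(X, ℝ), (∀ x, f x ∈ Icc 0 1) ∧ ∫ x, f x ∂μ + ∫ x, 1 - f x ∂ν < ε := by
  obtain ⟨t, -, hμt, hνt⟩ := h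
  have hε2 : ENNReal.ofReal (ε / 2) ≠ 0 := (ENNReal.ofReal_pos.2 (half_pos hε)).ne'
  obtain ⟨O', htO', hO', hνO'⟩ := tᶜ.exists_isOpen_lt_add (measure_ne_top ν _) hε2
  obtain ⟨O, hO'O, hO, hμO⟩ := (O'ᶜ).exists_isOpen_lt_add (measure_ne_top μ _) hε2
  rw [hνt, zero_add] at hνO'
  rw [measure_mono_null (compl_subset_comm.1 htO') hμt, zero_add] at hμO
  obtain ⟨f, hfO, hfO', hf01⟩ := exists_continuous_zero_one_of_isClosed hO.isClosed_compl
    hO'.isClosed_compl (disjoint_compl_left.mono_right hO'O)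
  refine ⟨f, hf01, ?_⟩
  have hμ : ∫ x, f x ∂μ ≤ μ.real O := by
    refine integral_le_measureReal_of_le_indicator hO.measurableSet (fun x => (hf01 x).1) ?_
    intro x
    by_cases hx : x ∈ O
    · simpa [hx] using (hf01 x).2
    · simp [hx, hfO hx]
  have hν : ∫ x, 1 - f x ∂ν ≤ ν.real O' := by
    refine integral_le_measureReal_of_le_indicator hO'.measurableSet
      (fun x => sub_nonneg.2 (hf01 x).2) ?_
    intro x
    by_cases hx : x ∈ O'
    · simpa [hx] using (hf01 x).1
    · simp [hx, hfO' hx]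
  have hμO_real : μ.real O < ε / 2 := ENNReal.toReal_lt_of_lt_ofReal hμO
  have hνO'_real : ν.real O' < ε / 2 := ENNReal.toReal_lt_of_lt_ofReal hνO'
  linarith

/-- A common lower bound `ξ` of `μ` and `ν` has total mass at most
`∫ f ∂ξ + ∫ (1 - f) ∂ξ ≤ ∫ f ∂μ + ∫ (1 - f) ∂ν` for every `f` with values in `[0, 1]`. -/
theorem MeasureTheory.Measure.mutuallySingular_of_forall_exists_integral_add_lt
    [OpensMeasurableSpace X] [IsFiniteMeasure μ] [IsFiniteMeasure ν]
    (h : ∀ ε > 0, ∃ f : C(X, ℝ), (∀ x, f x ∈ Icc 0 1) ∧ ∫ x, f x ∂μ + ∫ x, 1 - f x ∂ν < ε) :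
    μ ⟂ₘ ν := by
  refine Measure.mutuallySingular_iff_disjoint.2 fun ξ hξμ hξν => ?_
  have : IsFiniteMeasure ξ := isFiniteMeasure_of_le μ hξμ
  suffices ξ.real univ = 0 by
    rw [measureReal_eq_zero_iff, Measure.measure_univ_eq_zero] at this
    exact this.le
  refine le_antisymm (le_of_forall_pos_le_add fun ε hε => ?_) measureReal_nonneg
  obtain ⟨f, hf01, hf⟩ := h ε hε
  have hg01 : ∀ x, 1 - f x ∈ Icc 0 1 := fun x => ⟨by simp [(hf01 x).2], by simp [(hf01 x).1]⟩
  have hfi {κ : Measure X} [IsFiniteMeasure κ] : Integrable f κ :=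
    integrable_of_mem_Icc f.continuous.aestronglyMeasurable hf01
  have hgi {κ : Measure X} [IsFiniteMeasure κ] : Integrable (fun x => 1 - f x) κ :=
    integrable_of_mem_Icc (continuous_const.sub f.continuous).aestronglyMeasurable hg01
  calc ξ.real univ = ∫ x, f x ∂ξ + ∫ x, 1 - f x ∂ξ := by
        rw [← integral_add hfi hgi]
        simp
    _ ≤ ∫ x, f x ∂μ + ∫ x, 1 - f x ∂ν :=
        add_le_add (integral_mono_measure hξμ (.of_forall fun x => (hf01 x).1) hfi)
          (integral_mono_measure hξν (.of_forall fun x => (hg01 x).1) hgi)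
    _ ≤ 0 + ε := by linarith

theorem MeasureTheory.Measure.mutuallySingular_iff_forall_exists_continuous [NormalSpace X]
    [OpensMeasurableSpace X] [IsFiniteMeasure μ] [IsFiniteMeasure ν] [μ.OuterRegular]
    [ν.OuterRegular] :
    μ ⟂ₘ ν ↔
      ∀ ε > 0, ∃ f : C(X, ℝ), (∀ x, f x ∈ Icc 0 1) ∧ ∫ x, f x ∂μ + ∫ x, 1 - f x ∂ν < ε :=
  ⟨fun h _ hε => h.exists_continuous_integral_add_lt hε,
    mutuallySingular_of_forall_exists_integral_add_lt⟩

end Singularity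

theorem stmt13_general {d k : ℕ} (U : Set (EuclideanSpace ℝ (Fin k))) (hU : IsCompact U)
    (R : Set (EuclideanSpace ℝ (Fin d)))
    (ν : EuclideanSpace ℝ (Fin k) → Measure (EuclideanSpace ℝ (Fin d)))
    [∀ α, IsProbabilityMeasure (ν α)]
    (hcont : ∀ f : EuclideanSpace ℝ (Fin d) → ℝ, ContinuousOn f R →
      MapsTo f R (Icc (0:ℝ) 1) → ContinuousOn (fun α => ∫ x, f x ∂(ν α)) U)
    (lam : Measure (EuclideanSpace ℝ (Fin d))) [IsProbabilityMeasure lam] :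
    IsNowhereDense (Subtype.val ⁻¹' {α | (ν α).MutuallySingular lam} : Set U) ∨
      (((interior U).Nonempty ∧
          interior U ⊆ closure {α ∈ U | (ν α).MutuallySingular lam}) →
        packingDim {α ∈ U | (ν α).MutuallySingular lam} = (k : EReal)) := by
  refine Or.inr fun ⟨hVne, hVS⟩ => ?_
  set S := {α ∈ U | (ν α).MutuallySingular lam}
  obtain ⟨G, hG, hGU⟩ : ∃ G, IsGδ G ∧ G ∩ U = S := by
    obtain ⟨G, hG, hGU⟩ := exists_isGδ_inter_eq (U := U)
      (g := fun (f : {f : C(EuclideanSpace ℝ (Fin d), ℝ) // ∀ x, f x ∈ Icc 0 1}) α =>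
        ∫ x, f.1 x ∂ν α + ∫ x, 1 - f.1 x ∂lam)
      fun f => (hcont f.1 f.1.continuous.continuousOn fun x _ => f.2 x).add continuousOn_const
    refine ⟨G, hG, hGU.trans ?_⟩
    simp [S, Measure.mutuallySingular_iff_forall_exists_continuous]
  refine le_antisymm ((packingDim_le_upperBoxDim S).trans ?_) (le_packingDim fun E hE => ?_)
  · simpa using upperBoxDim_le_finrank (hU.isBounded.subset (sep_subset U _))
  · obtain ⟨i, hi⟩ := hG.exists_nonempty_interior_closure isOpen_interior hVne
      (hVS.trans (closure_mono (hGU ▸ inter_subset_left)))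
      fun x hx => hE (hGU ▸ ⟨hx.1, interior_subset hx.2⟩)
    exact ⟨i, by simpa using finrank_le_upperBoxDim hi⟩

/-- For a family `ν_α`, `α ∈ U ⊆ ℝ^k` (`U` compact), of Radon probability
measures on a bounded open `R ⊆ ℝ^d` depending continuously on `α` (weakly, tested against
continuous `f : R → [0,1]`), and a Radon probability measure `lam` on `R`, the set
`S = {α ∈ U : ν_α ⊥ lam}` is either nowhere dense in `U`, or — if `U` has nonempty interior
contained in the closure of `S` — it has packing dimension `k`. -/
theorem stmt13 {d k : ℕ} (U : Set (EuclideanSpace ℝ (Fin k))) (hU : IsCompact U)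
    (R : Set (EuclideanSpace ℝ (Fin d))) (hRb : Bornology.IsBounded R) (hRo : IsOpen R)
    (ν : EuclideanSpace ℝ (Fin k) → Measure (EuclideanSpace ℝ (Fin d)))
    [∀ α, IsProbabilityMeasure (ν α)] [∀ α, (ν α).Regular] (hνR : ∀ α, (ν α) Rᶜ = 0)
    (hcont : ∀ f : EuclideanSpace ℝ (Fin d) → ℝ, ContinuousOn f R →
      MapsTo f R (Icc (0:ℝ) 1) → ContinuousOn (fun α => ∫ x, f x ∂(ν α)) U)
    (lam : Measure (EuclideanSpace ℝ (Fin d))) [IsProbabilityMeasure lam] [lam.Regular]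
    (hlamR : lam Rᶜ = 0) :
    IsNowhereDense (Subtype.val ⁻¹' {α | (ν α).MutuallySingular lam} : Set U) ∨
      (((interior U).Nonempty ∧
          interior U ⊆ closure {α ∈ U | (ν α).MutuallySingular lam}) →
        packingDim {α ∈ U | (ν α).MutuallySingular lam} = (k : EReal)) :=
  stmt13_general U hU R ν hcont lam
end
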